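/- arXiv:2302.06309 — 4 statements merged into one kernel-verified Lean document; each statement's English description precedes it below -/
import Mathlib

section
/- Suppose there exist constants $c_1, c_2 > 0$ such that for every bivariate Gaussian vector $X = (Z,Z)$ with $Z$ standard Gaussian, all increasing events $A_1, A_2$ depending on the respective coordinates, and all $\varepsilon > 0$, one has $\Pr[X \in A_1 \cap A_2] - \Pr[X + \varepsilon\mathbf{1} \in A_1]\Pr[X + \varepsilon\mathbf{1} \in A_2] \le c_1 e^{-c_2 \varepsilon^2 / \|K_{I_1,I_2}\|_\infty}$. Then $c_2 \le 3 + 2\sqrt{2}$. -/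
/-!
Apply the decorrelation inequality to the threshold events `{x₀ ≥ u}` and `{x₁ ≥ u}` with
`ε = κ u`: this gives `P(Z ≥ u) ≤ P(Z ≥ (1 - κ) u)² + c₁ exp(-c₂ κ² u²)`. The left side is at
least of order `exp(-(u + 1)² / 2)`, while by the Chernoff bound the right side is
`O(exp(-min(c₂ κ², (1 - κ)²) u²))`. Hence no `κ` makes both rates exceed `1/2`; the optimal
choice `κ ↑ 1 - 1/√2` turns this into `c₂ ≤ 3 + 2√2`.
-/

open MeasureTheory ProbabilityTheory

/-- An event `A ⊆ ℝⁿ` is increasing if it is closed under adding coordinatewise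
nonnegative vectors. -/
def IncreasingEvent {n : ℕ} (A : Set (Fin n → ℝ)) : Prop :=
  ∀ x ∈ A, ∀ v : Fin n → ℝ, (∀ i, 0 ≤ v i) → x + v ∈ A

/-- An event `A` is supported on `I` if membership is unchanged by modifying
coordinates outside `I`. -/
def SupportedOn {n : ℕ} (A : Set (Fin n → ℝ)) (I : Set (Fin n)) : Prop :=
  ∀ x y : Fin n → ℝ, (∀ i ∈ I, x i = y i) → (x ∈ A ↔ y ∈ A)

/-- `X` is a Gaussian vector: every linear combination of coordinates is Gaussian. -/
def IsGaussianVector {Ω : Type*} [MeasureSpace Ω] {n : ℕ} (X : Ω → Fin n → ℝ) : Prop :=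
  ∀ a : Fin n → ℝ, ∃ (m : ℝ) (v : NNReal),
    Measure.map (fun ω => ∑ i, a i * X ω i) ℙ = gaussianReal m v

/-- The threshold `T_A(x) = sup {u : x - u·𝟙 ∈ A}` of an increasing event. -/
noncomputable def thr {n : ℕ} (A : Set (Fin n → ℝ)) (x : Fin n → ℝ) : ℝ :=
  sSup {u : ℝ | (fun i => x i - u) ∈ A}

/-- `‖K_{I₁,I₂}‖_∞ = max_{i ∈ I₁, j ∈ I₂} |K(i,j)|`. -/
noncomputable def kNorm {n : ℕ} (K : Fin n → Fin n → ℝ) (I1 I2 : Finset (Fin n)) : ℝ :=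
  sSup {r : ℝ | ∃ i ∈ I1, ∃ j ∈ I2, r = |K i j|}

open Real Filter Topology

/-- The decorrelation inequality for `X = (Z, Z)`, for which `‖K_{I₁,I₂}‖_∞ = 1`. -/
def HasDecorrelationBound {Ω : Type*} [MeasureSpace Ω] (Z : Ω → ℝ) (c1 c2 : ℝ) : Prop :=
  ∀ A1 A2 : Set (Fin 2 → ℝ),
    IncreasingEvent A1 → IncreasingEvent A2 →
    SupportedOn A1 {0} → SupportedOn A2 {1} →
    ∀ ε : ℝ, 0 < ε →
      (ℙ {ω | (fun _ : Fin 2 => Z ω) ∈ A1 ∩ A2}).toReal -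
          (ℙ {ω | (fun _ : Fin 2 => Z ω + ε) ∈ A1}).toReal *
            (ℙ {ω | (fun _ : Fin 2 => Z ω + ε) ∈ A2}).toReal ≤
        c1 * Real.exp (-c2 * ε ^ 2)

lemma increasingEvent_setOf_le_apply {n : ℕ} (u : ℝ) (i : Fin n) :
    IncreasingEvent {x : Fin n → ℝ | u ≤ x i} :=
  fun _ hx _ hv => le_add_of_le_of_nonneg hx (hv i)

lemma supportedOn_setOf_le_apply {n : ℕ} (u : ℝ) (i : Fin n) :
    SupportedOn {x : Fin n → ℝ | u ≤ x i} {i} :=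
  fun x y h => by simp only [Set.mem_ofPred_eq, h i rfl]

lemma HasDecorrelationBound.toReal_le_sq_add {Ω : Type*} [MeasureSpace Ω] {Z : Ω → ℝ}
    {c1 c2 : ℝ} (h : HasDecorrelationBound Z c1 c2) (u : ℝ) {ε : ℝ} (hε : 0 < ε) :
    (ℙ {ω | u ≤ Z ω}).toReal ≤
      (ℙ {ω | u - ε ≤ Z ω}).toReal ^ 2 + c1 * exp (-c2 * ε ^ 2) := by
  have key := h _ _ (increasingEvent_setOf_le_apply u 0) (increasingEvent_setOf_le_apply u 1)
    (supportedOn_setOf_le_apply u 0) (supportedOn_setOf_le_apply u 1) ε hε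
  simp only [Set.mem_inter_iff, Set.mem_ofPred_eq, and_self, ← sub_le_iff_le_add] at key
  rw [sq]
  linarith

lemma toReal_prob_le_eq_measureReal_Ici {Ω : Type*} [MeasureSpace Ω] {Z : Ω → ℝ}
    (hZ : Measure.map Z ℙ = gaussianReal 0 1) (t : ℝ) :
    (ℙ {ω | t ≤ Z ω}).toReal = (gaussianReal 0 1).real (Set.Ici t) := by
  have hZm : AEMeasurable Z ℙ := .of_map_ne_zero (by rw [hZ]; exact IsProbabilityMeasure.ne_zero _)
  rw [← hZ, map_measureReal_apply_of_aemeasurable hZm measurableSet_Ici]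
  rfl

lemma measureReal_gaussianReal_Ici_le {v : ℝ} (hv : 0 ≤ v) :
    (gaussianReal 0 1).real (Set.Ici v) ≤ exp (-v ^ 2 / 2) := by
  have chernoff := measure_ge_le_exp_mul_mgf (X := id) (μ := gaussianReal 0 1) v hv
    (integrable_exp_mul_gaussianReal v)
  rw [mgf_id_gaussianReal, ← exp_add] at chernoff
  exact chernoff.trans_eq (by congr 1; push_cast; ring)

lemma exp_le_measureReal_gaussianReal_Ici {u : ℝ} (hu : 0 ≤ u) :
    (√(2 * π))⁻¹ * exp (-(u + 1) ^ 2 / 2) ≤ (gaussianReal 0 1).real (Set.Ici u) := by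
  have hpdf : ∀ x ∈ Set.Icc u (u + 1), gaussianPDFReal 0 1 (u + 1) ≤ gaussianPDFReal 0 1 x := by
    rintro x ⟨hux, hxu⟩
    simp only [gaussianPDFReal, NNReal.coe_one, mul_one, sub_zero]
    gcongr
    nlinarith
  have hint := integrable_gaussianPDFReal 0 1
  calc (√(2 * π))⁻¹ * exp (-(u + 1) ^ 2 / 2)
      = ∫ _ in Set.Icc u (u + 1), gaussianPDFReal 0 1 (u + 1) := by
        simp [gaussianPDFReal]
    _ ≤ ∫ x in Set.Icc u (u + 1), gaussianPDFReal 0 1 x :=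
        setIntegral_mono_on (integrableOn_const (by simp) enorm_ne_top) hint.restrict
          measurableSet_Icc hpdf
    _ ≤ ∫ x in Set.Ici u, gaussianPDFReal 0 1 x :=
        setIntegral_mono_set hint.restrict (.of_forall (gaussianPDFReal_nonneg 0 1))
          Set.Icc_subset_Ici_self.eventuallyLE
    _ = (gaussianReal 0 1).real (Set.Ici u) := by
        rw [measureReal_def, gaussianReal_apply_eq_integral 0 one_ne_zero,
          ENNReal.toReal_ofReal (setIntegral_nonneg measurableSet_Ici
            fun x _ => gaussianPDFReal_nonneg 0 1 x)]

lemma not_forall_measureReal_gaussianReal_Ici_le {a : ℝ} (ha : 1 / 2 < a) (C : ℝ) :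
    ¬ ∀ u > 0, (gaussianReal 0 1).real (Set.Ici u) ≤ C * exp (-a * u ^ 2) := by
  intro h
  have hgrowth : Tendsto (fun u => u * ((a - 1 / 2) * u - 1) - 1 / 2) atTop atTop :=
    tendsto_atTop_add_const_right _ _ (tendsto_id.atTop_mul_atTop₀
      (tendsto_atTop_add_const_right _ _ (tendsto_id.const_mul_atTop (by linarith))))
  obtain ⟨u, hu, hlarge⟩ := ((eventually_gt_atTop 0).and
    ((tendsto_exp_atTop.comp hgrowth).eventually_gt_atTop (C * √(2 * π)))).exists
  have hsplit : exp (-(u + 1) ^ 2 / 2) =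
      exp (u * ((a - 1 / 2) * u - 1) - 1 / 2) * exp (-a * u ^ 2) := by
    rw [← exp_add]; ring_nf
  have htail := (exp_le_measureReal_gaussianReal_Ici hu.le).trans (h u hu)
  rw [hsplit, ← mul_assoc] at htail
  have hbound := le_of_mul_le_mul_right htail (exp_pos _)
  rw [inv_mul_le_iff₀ (by positivity)] at hbound
  simp only [Function.comp_apply] at hlarge
  linarith [mul_comm C √(2 * π)]

lemma exists_half_lt_mul_sq_and_half_lt_one_sub_sq {c : ℝ} (hc : 3 + 2 * √2 < c) :
    ∃ κ, 0 < κ ∧ κ < 1 ∧ 1 / 2 < c * κ ^ 2 ∧ 1 / 2 < (1 - κ) ^ 2 := by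
  have hsq : √2 ^ 2 = 2 := sq_sqrt (by norm_num)
  have hlt : √2 < 3 / 2 := by nlinarith [sqrt_nonneg 2]
  -- At `κ₀ = 1 - 1/√2` the second rate is exactly `1/2`, and the first is
  -- `c (3 - 2√2) / 2 > 1/2` since `(3 + 2√2)(3 - 2√2) = 1`.
  have hκ₀ : 1 / 2 < c * (1 - √2 / 2) ^ 2 := by
    nlinarith [mul_pos (sub_pos.2 hc) (show 0 < 3 - 2 * √2 by linarith)]
  have hnear : ∀ᶠ κ in 𝓝 (1 - √2 / 2), 0 < κ ∧ 1 / 2 < c * κ ^ 2 :=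
    (lt_mem_nhds (by linarith)).and
      (((continuous_const.mul (continuous_pow 2)).tendsto _).eventually (lt_mem_nhds hκ₀))
  obtain ⟨κ, hκ, hκ_pos, hcκ⟩ :=
    (eventually_mem_nhdsWithin.and (nhdsWithin_le_nhds hnear)).exists (f := 𝓝[<] (1 - √2 / 2))
  have hκ' : √2 / 2 < 1 - κ := by linarith [Set.mem_Iio.1 hκ]
  exact ⟨κ, hκ_pos, by linarith [sqrt_nonneg 2], hcκ, by nlinarith [sqrt_nonneg 2]⟩

theorem stmt7_general {Ω : Type*} [MeasureSpace Ω]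
    (Z : Ω → ℝ) (hZ : Measure.map Z ℙ = gaussianReal 0 1)
    (c1 c2 : ℝ)
    (hyp : ∀ A1 A2 : Set (Fin 2 → ℝ),
      IncreasingEvent A1 → IncreasingEvent A2 →
      SupportedOn A1 {0} → SupportedOn A2 {1} →
      ∀ ε : ℝ, 0 < ε →
        (ℙ {ω | (fun _ : Fin 2 => Z ω) ∈ A1 ∩ A2}).toReal -
            (ℙ {ω | (fun _ : Fin 2 => Z ω + ε) ∈ A1}).toReal *
              (ℙ {ω | (fun _ : Fin 2 => Z ω + ε) ∈ A2}).toReal ≤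
          c1 * Real.exp (-c2 * ε ^ 2)) :
    c2 ≤ 3 + 2 * Real.sqrt 2 := by
  by_contra! hc
  obtain ⟨κ, hκ, hκ1, hcκ, hκ'⟩ := exists_half_lt_mul_sq_and_half_lt_one_sub_sq hc
  set a := min (c2 * κ ^ 2) ((1 - κ) ^ 2)
  refine not_forall_measureReal_gaussianReal_Ici_le (lt_min hcκ hκ') (1 + |c1|) fun u hu => ?_
  have hdec := HasDecorrelationBound.toReal_le_sq_add hyp u (mul_pos hκ hu)
  rw [toReal_prob_le_eq_measureReal_Ici hZ, toReal_prob_le_eq_measureReal_Ici hZ] at hdec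
  have hu' : 0 ≤ u - κ * u := by nlinarith
  have hmain_rate : exp (-(u - κ * u) ^ 2 / 2) ^ 2 ≤ exp (-a * u ^ 2) := by
    rw [← exp_nat_mul, exp_le_exp]
    push_cast
    nlinarith [mul_le_mul_of_nonneg_right (min_le_right (c2 * κ ^ 2) ((1 - κ) ^ 2)) (sq_nonneg u)]
  have herror_rate : exp (-c2 * (κ * u) ^ 2) ≤ exp (-a * u ^ 2) := by
    rw [exp_le_exp]
    nlinarith [mul_le_mul_of_nonneg_right (min_le_left (c2 * κ ^ 2) ((1 - κ) ^ 2)) (sq_nonneg u)]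
  calc (gaussianReal 0 1).real (Set.Ici u)
      ≤ (gaussianReal 0 1).real (Set.Ici (u - κ * u)) ^ 2 + c1 * exp (-c2 * (κ * u) ^ 2) := hdec
    _ ≤ exp (-(u - κ * u) ^ 2 / 2) ^ 2 + |c1| * exp (-c2 * (κ * u) ^ 2) := by
        gcongr
        exacts [measureReal_gaussianReal_Ici_le hu', le_abs_self c1]
    _ ≤ exp (-a * u ^ 2) + |c1| * exp (-a * u ^ 2) := by gcongr
    _ = (1 + |c1|) * exp (-a * u ^ 2) := by ring

theorem stmt7 {Ω : Type*} [MeasureSpace Ω] [IsProbabilityMeasure (ℙ : Measure Ω)]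
    (Z : Ω → ℝ) (hZ : Measure.map Z ℙ = gaussianReal 0 1)
    (c1 c2 : ℝ) (hc1 : 0 < c1) (hc2 : 0 < c2)
    (hyp : ∀ A1 A2 : Set (Fin 2 → ℝ),
      IncreasingEvent A1 → IncreasingEvent A2 →
      SupportedOn A1 {0} → SupportedOn A2 {1} →
      ∀ ε : ℝ, 0 < ε →
        (ℙ {ω | (fun _ : Fin 2 => Z ω) ∈ A1 ∩ A2}).toReal -
            (ℙ {ω | (fun _ : Fin 2 => Z ω + ε) ∈ A1}).toReal *
              (ℙ {ω | (fun _ : Fin 2 => Z ω + ε) ∈ A2}).toReal ≤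
          c1 * Real.exp (-c2 * ε ^ 2)) :
    c2 ≤ 3 + 2 * Real.sqrt 2 :=
  stmt7_general Z hZ c1 c2 hyp
end

section
/- Let $\Phi$ denote the standard Gaussian CDF and for $\rho \in [-1,1]$ let $\Phi_\rho(u,v) = \Pr[Z \le u, \rho Z + \sqrt{1-\rho^2}Z' \le v]$ where $Z, Z'$ are independent standard Gaussians. Then for all $\rho \in (0,1]$, all $u, v \in \mathbb{R}$, and all $\varepsilon \ge 0$: $\Phi_\rho(u,v) \le \Phi(u)\Phi(v+\varepsilon) + e^{-\varepsilon^2/(8\rho^2)}$. -/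
/-!
Split according to whether `Z ≥ -t`, with `ρ t = ε / 2`. On that event
`ρ Z + √(1-ρ²) Z' ≤ v` forces `√(1-ρ²) Z' ≤ v + ε/2`, an event independent of `Z`; and
`√(1-ρ²) Z' ≤ v + ε/2` in turn forces `ρ Z + √(1-ρ²) Z' ≤ v + ε` unless `Z > t`. Since
`ρ Z + √(1-ρ²) Z'` is again standard Gaussian, `Φ_ρ(u, v) ≤ Φ(u) Φ(v + ε) + 2 P[Z > t]`, and
`P[Z > t] ≤ e^{-t²/2} / 2`.
-/

open MeasureTheory ProbabilityTheory

/-- The standard Gaussian CDF. -/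
noncomputable def Phi (u : ℝ) : ℝ := ((gaussianReal 0 1) (Set.Iic u)).toReal

/-- The CDF of a ρ-correlated bivariate standard Gaussian vector:
`Φ_ρ(u,v) = P[Z ≤ u, ρZ + √(1-ρ²) Z' ≤ v]` for independent standard Gaussians `Z, Z'`. -/
noncomputable def Phi2 (ρ u v : ℝ) : ℝ :=
  (((gaussianReal 0 1).prod (gaussianReal 0 1))
    {p : ℝ × ℝ | p.1 ≤ u ∧ ρ * p.1 + Real.sqrt (1 - ρ ^ 2) * p.2 ≤ v}).toReal

open Set
open scoped NNReal

lemma gaussianReal_prod_map_linear (a b m₁ m₂ : ℝ) (v₁ v₂ : ℝ≥0) :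
    ((gaussianReal m₁ v₁).prod (gaussianReal m₂ v₂)).map (fun p ↦ a * p.1 + b * p.2) =
      gaussianReal (a * m₁ + b * m₂) (⟨a ^ 2, sq_nonneg a⟩ * v₁ + ⟨b ^ 2, sq_nonneg b⟩ * v₂) := by
  have hcomp : (fun p : ℝ × ℝ ↦ a * p.1 + b * p.2) =
      (fun q ↦ q.1 + q.2) ∘ Prod.map (a * ·) (b * ·) := rfl
  rw [hcomp, ← Measure.map_map (by fun_prop) (by fun_prop),
    ← Measure.map_prod_map _ _ (by fun_prop) (by fun_prop), gaussianReal_map_const_mul,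
    gaussianReal_map_const_mul, ← gaussianReal_conv_gaussianReal]
  rfl

lemma prod_gaussianReal_real_linear_le_eq_Phi {a b : ℝ} (hab : a ^ 2 + b ^ 2 = 1) (c : ℝ) :
    ((gaussianReal 0 1).prod (gaussianReal 0 1)).real {p | a * p.1 + b * p.2 ≤ c} = Phi c := by
  have hpre : {p : ℝ × ℝ | a * p.1 + b * p.2 ≤ c} = (fun p ↦ a * p.1 + b * p.2) ⁻¹' Iic c := rfl
  rw [Phi, measureReal_def, hpre, ← Measure.map_apply (by fun_prop) measurableSet_Iic,
    gaussianReal_prod_map_linear]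
  congr
  · simp
  · ext
    change a ^ 2 * 1 + b ^ 2 * 1 = 1
    simpa using hab

lemma gaussianReal_real_Iio_neg (v : ℝ≥0) (t : ℝ) :
    (gaussianReal 0 v).real (Iio (-t)) = (gaussianReal 0 v).real (Ioi t) := by
  have hsymm := gaussianReal_map_neg (μ := 0) (v := v)
  rw [neg_zero] at hsymm
  rw [← hsymm, map_measureReal_apply (by fun_prop) measurableSet_Ioi]
  congr 1
  ext x
  simp

lemma gaussianReal_real_Ioi_zero {v : ℝ≥0} (hv : v ≠ 0) :
    (gaussianReal 0 v).real (Ioi 0) = 1 / 2 := by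
  have := nullSingletonClass_gaussianReal (μ := 0) hv
  have hIic : (gaussianReal 0 v).real (Iic 0) = (gaussianReal 0 v).real (Ioi 0) := by
    rw [← measureReal_congr Iio_ae_eq_Iic, ← gaussianReal_real_Iio_neg, neg_zero]
  have hsum :=
    measureReal_add_measureReal_compl (μ := gaussianReal 0 v) (measurableSet_Ioi (a := 0))
  rw [compl_Ioi, hIic, probReal_univ] at hsum
  linarith

lemma gaussianPDFReal_neg_le {t x : ℝ} (ht : 0 ≤ t) (hx : 0 ≤ x) :
    gaussianPDFReal (-t) 1 x ≤ Real.exp (-t ^ 2 / 2) * gaussianPDFReal 0 1 x := by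
  simp only [gaussianPDFReal_def, NNReal.coe_one, mul_one, sub_zero, sub_neg_eq_add]
  rw [mul_left_comm, ← Real.exp_add]
  gcongr
  nlinarith [mul_nonneg ht hx]

lemma gaussianReal_Ioi_le {t : ℝ} (ht : 0 ≤ t) :
    gaussianReal 0 1 (Ioi t) ≤
      ENNReal.ofReal (Real.exp (-t ^ 2 / 2)) * gaussianReal 0 1 (Ioi 0) := by
  have hshift : gaussianReal 0 1 (Ioi t) = gaussianReal (-t) 1 (Ioi 0) := by
    rw [← zero_add (-t), ← gaussianReal_map_add_const,
      Measure.map_apply (by fun_prop) measurableSet_Ioi]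
    congr 1
    ext x
    simp
  rw [hshift, gaussianReal_apply _ one_ne_zero, gaussianReal_apply _ one_ne_zero,
    ← lintegral_const_mul' _ _ ENNReal.ofReal_ne_top]
  refine setLIntegral_mono' measurableSet_Ioi fun x hx ↦ ?_
  rw [gaussianPDF, gaussianPDF, ← ENNReal.ofReal_mul (Real.exp_nonneg _)]
  exact ENNReal.ofReal_le_ofReal (gaussianPDFReal_neg_le ht (le_of_lt hx))

lemma gaussianReal_real_Ioi_le {t : ℝ} (ht : 0 ≤ t) :
    (gaussianReal 0 1).real (Ioi t) ≤ Real.exp (-t ^ 2 / 2) / 2 := by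
  have h := ENNReal.toReal_mono (by finiteness) (gaussianReal_Ioi_le ht)
  rwa [ENNReal.toReal_mul, ENNReal.toReal_ofReal (Real.exp_nonneg _), ← measureReal_def,
    ← measureReal_def, gaussianReal_real_Ioi_zero one_ne_zero, ← div_eq_mul_one_div] at h

section Decoupling

variable {μ ν : Measure ℝ} {ρ : ℝ} (s a : ℝ)

lemma prod_real_le_mul_add [IsFiniteMeasure μ] [IsProbabilityMeasure ν] (hρ : 0 ≤ ρ)
    (u v : ℝ) :
    (μ.prod ν).real {p | p.1 ≤ u ∧ ρ * p.1 + s * p.2 ≤ v} ≤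
      μ.real (Iic u) * ν.real {y | s * y ≤ v + ρ * a} + μ.real (Iio (-a)) := by
  have hsub : {p : ℝ × ℝ | p.1 ≤ u ∧ ρ * p.1 + s * p.2 ≤ v} ⊆
      Iic u ×ˢ {y | s * y ≤ v + ρ * a} ∪ Iio (-a) ×ˢ univ := by
    rintro p ⟨hpu, hpv⟩
    by_cases hpa : p.1 < -a
    · exact Or.inr ⟨hpa, trivial⟩
    · refine Or.inl ⟨hpu, ?_⟩
      show s * p.2 ≤ v + ρ * a
      nlinarith
  calc (μ.prod ν).real {p | p.1 ≤ u ∧ ρ * p.1 + s * p.2 ≤ v}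
      ≤ (μ.prod ν).real (Iic u ×ˢ {y | s * y ≤ v + ρ * a} ∪ Iio (-a) ×ˢ univ) :=
        measureReal_mono hsub
    _ ≤ (μ.prod ν).real (Iic u ×ˢ {y | s * y ≤ v + ρ * a}) + (μ.prod ν).real (Iio (-a) ×ˢ univ) :=
        measureReal_union_le _ _
    _ = μ.real (Iic u) * ν.real {y | s * y ≤ v + ρ * a} + μ.real (Iio (-a)) := by
        rw [measureReal_prod_prod, measureReal_prod_prod, probReal_univ, mul_one]

lemma real_le_prod_real_add [IsProbabilityMeasure μ] [IsProbabilityMeasure ν] (hρ : 0 ≤ ρ) (w : ℝ) :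
    ν.real {y | s * y ≤ w} ≤
      (μ.prod ν).real {p | ρ * p.1 + s * p.2 ≤ w + ρ * a} + μ.real (Ioi a) := by
  have hsub : univ ×ˢ {y | s * y ≤ w} ⊆
      {p : ℝ × ℝ | ρ * p.1 + s * p.2 ≤ w + ρ * a} ∪ Ioi a ×ˢ univ := by
    rintro p ⟨-, hpw⟩
    by_cases hpa : a < p.1
    · exact Or.inr ⟨hpa, trivial⟩
    · refine Or.inl ?_
      show ρ * p.1 + s * p.2 ≤ w + ρ * a
      nlinarith [hpw.out]
  calc ν.real {y | s * y ≤ w} = (μ.prod ν).real (univ ×ˢ {y | s * y ≤ w}) := by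
        rw [measureReal_prod_prod, probReal_univ, one_mul]
    _ ≤ (μ.prod ν).real ({p | ρ * p.1 + s * p.2 ≤ w + ρ * a} ∪ Ioi a ×ˢ univ) :=
        measureReal_mono hsub
    _ ≤ (μ.prod ν).real {p | ρ * p.1 + s * p.2 ≤ w + ρ * a} + (μ.prod ν).real (Ioi a ×ˢ univ) :=
        measureReal_union_le _ _
    _ = (μ.prod ν).real {p | ρ * p.1 + s * p.2 ≤ w + ρ * a} + μ.real (Ioi a) := by
        rw [measureReal_prod_prod, probReal_univ, mul_one]

end Decoupling

theorem stmt8 (ρ : ℝ) (hρ0 : 0 < ρ) (hρ1 : ρ ≤ 1) (u v ε : ℝ) (hε : 0 ≤ ε) :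
    Phi2 ρ u v ≤ Phi u * Phi (v + ε) + Real.exp (-ε ^ 2 / (8 * ρ ^ 2)) := by
  rw [Phi2, ← measureReal_def]
  set s := Real.sqrt (1 - ρ ^ 2)
  have hρs : ρ ^ 2 + s ^ 2 = 1 := by
    rw [Real.sq_sqrt (by nlinarith)]
    ring
  set t := ε / (2 * ρ)
  have hρt : ρ * t = ε / 2 := by
    simp only [t]
    field_simp
  have hcond := prod_real_le_mul_add (μ := gaussianReal 0 1) (ν := gaussianReal 0 1) s t hρ0.le u v
  have hrecouple := real_le_prod_real_add (μ := gaussianReal 0 1) (ν := gaussianReal 0 1) s t hρ0.le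
    (v + ρ * t)
  rw [gaussianReal_real_Iio_neg, hρt] at hcond
  change _ ≤ Phi u * _ + _ at hcond
  rw [hρt, add_assoc, add_halves, prod_gaussianReal_real_linear_le_eq_Phi hρs] at hrecouple
  have htail := gaussianReal_real_Ioi_le (t := t) (by positivity)
  have hexp : -t ^ 2 / 2 = -ε ^ 2 / (8 * ρ ^ 2) := by
    simp only [t]
    field_simp
    ring
  have hPhi_le : Phi u ≤ 1 := measureReal_le_one
  have hPhi_nonneg : 0 ≤ Phi u := measureReal_nonneg
  rw [hexp] at htail
  nlinarith [measureReal_nonneg (μ := gaussianReal 0 1) (s := Ioi t)]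
end

section
/- Let $X$ be an $n$-dimensional Gaussian vector with covariance $K$, and suppose $X \stackrel{d}{=} X_1 + X_2$ where $X_1$ is a Gaussian vector such that $X_1|_{I_1}$ and $X_1|_{I_2}$ are independent, and $X_2$ is a centred Gaussian vector (not necessarily independent of $X_1$) with $\max_{i \in I_1 \cup I_2}\mathrm{Var}[(X_2)_i] \le \sigma^2$. Then for all increasing events $A_1 \in \sigma(I_1)$, $A_2 \in \sigma(I_2)$ and all $\varepsilon > 0$: $\Pr[X \in A_1 \cap A_2] - \Pr[X + \varepsilon\mathbf{1} \in A_1]\Pr[X + \varepsilon\mathbf{1} \in A_2] \le 3\max\{|I_1|, |I_2|\}\, e^{-\varepsilon^2/(8\sigma^2)}$. -/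
open MeasureTheory ProbabilityTheory

/-!
Shifting by `δ > 0` moves an increasing event into its interior, so it suffices to treat open
events. Off the event that some coordinate of `X₂` on `I₁ ∪ I₂` exceeds `c`, `X ∈ A₁ ∩ A₂` puts
`X₁ + c` in both events, and these two probabilities factor by independence; off the event that
some coordinate of `X₂` drops below `-c`, `X₁ + c ∈ Aₖ` puts `X + δ + 2c` in `Aₖ`. Each of the at
most `4 max(|I₁|, |I₂|)` bad coordinate events costs a Gaussian tail `e^{-c²/(2σ²)}/2`; take
`c = (ε - δ)/2` and let `δ → 0`.
-/

open Set Filter Topology Real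
open scoped NNReal

section UpperSets

variable {n : ℕ} {A : Set (Fin n → ℝ)} {I : Set (Fin n)}

lemma IncreasingEvent.isUpperSet (h : IncreasingEvent A) : IsUpperSet A := fun x y hxy hx => by
  simpa using h x hx (y - x) fun i => sub_nonneg.2 (hxy i)

lemma SupportedOn.mem_of_le (hS : SupportedOn A I) (hA : IsUpperSet A) {x y : Fin n → ℝ}
    (hx : x ∈ A) (hxy : ∀ i ∈ I, x i ≤ y i) : y ∈ A :=
  (hS (x ⊔ y) y fun i hi => sup_eq_right.2 (hxy i hi)).1 (hA le_sup_left hx)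

protected lemma SupportedOn.interior (h : SupportedOn A I) : SupportedOn (interior A) I := by
  intro x y hxy
  have hA : Homeomorph.addRight (y - x) ⁻¹' A = A :=
    Set.ext fun z => h _ _ fun i hi => by simp [hxy i hi]
  calc x ∈ interior A ↔ x ∈ interior (Homeomorph.addRight (y - x) ⁻¹' A) := by rw [hA]
    _ ↔ y ∈ interior A := by
      rw [← Homeomorph.preimage_interior]
      exact iff_of_eq (congrArg (· ∈ interior A) (add_sub_cancel x y))

lemma SupportedOn.preimage_add_const (h : SupportedOn A I) (c : ℝ) :
    SupportedOn ((· + fun _ => c) ⁻¹' A) I :=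
  fun x y hxy => h _ _ fun i hi => by simp [hxy i hi]

lemma IsUpperSet.preimage_add_const (h : IsUpperSet A) (c : ℝ) :
    IsUpperSet ((· + fun _ => c) ⁻¹' A) :=
  h.preimage fun _ _ hxy => add_le_add_left hxy _

lemma IsUpperSet.add_const_mem_interior (h : IsUpperSet A) {x : Fin n → ℝ} (hx : x ∈ A) {δ : ℝ}
    (hδ : 0 < δ) : x + (fun _ => δ) ∈ interior A :=
  h.mem_interior_of_forall_lt (subset_closure hx) fun i => lt_add_of_pos_right (x i) hδ

end UpperSets

section Decoupling

variable {Ω : Type*} {mΩ : MeasurableSpace Ω} {μ : Measure Ω} {n : ℕ} {I J : Finset (Fin n)}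
  {U V : Set (Fin n → ℝ)}

lemma measureReal_preimage_inter_eq_mul {Y : Ω → Fin n → ℝ}
    (hY : IndepFun (fun ω (i : I) => Y ω i) (fun ω (i : J) => Y ω i) μ)
    (hUm : MeasurableSet U) (hVm : MeasurableSet V) (hUI : SupportedOn U I)
    (hVJ : SupportedOn V J) :
    μ.real (Y ⁻¹' (U ∩ V)) = μ.real (Y ⁻¹' U) * μ.real (Y ⁻¹' V) := by
  let extend (K : Finset (Fin n)) (y : K → ℝ) : Fin n → ℝ :=
    fun i => if h : i ∈ K then y ⟨i, h⟩ else 0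
  have measurable_extend (K : Finset (Fin n)) : Measurable (extend K) :=
    measurable_pi_lambda _ fun i => by
      by_cases h : i ∈ K
      · simpa [extend, h] using measurable_pi_apply _
      · simp [extend, h]
  have preimage_eq {W : Set (Fin n → ℝ)} {K : Finset (Fin n)} (hW : SupportedOn W K) :
      Y ⁻¹' W = (fun ω (i : K) => Y ω i) ⁻¹' (extend K ⁻¹' W) :=
    Set.ext fun ω => hW _ _ fun i hi => by simp [extend, Finset.mem_coe.1 hi]
  rw [preimage_inter, preimage_eq hUI, preimage_eq hVJ, measureReal_def, measureReal_def,
    measureReal_def, hY.measure_inter_preimage_eq_mul _ _ (hUm.preimage (measurable_extend I))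
    (hVm.preimage (measurable_extend J)), ENNReal.toReal_mul]

variable [IsFiniteMeasure μ] {Y Z : Ω → Fin n → ℝ}

lemma measureReal_add_mem_inter_le
    (hY : IndepFun (fun ω (i : I) => Y ω i) (fun ω (i : J) => Y ω i) μ)
    (hUm : MeasurableSet U) (hVm : MeasurableSet V) (hU : IsUpperSet U) (hV : IsUpperSet V)
    (hUI : SupportedOn U I) (hVJ : SupportedOn V J) (c : ℝ) :
    μ.real {ω | Y ω + Z ω ∈ U ∩ V} ≤
      μ.real {ω | Y ω + (fun _ => c) ∈ U} * μ.real {ω | Y ω + (fun _ => c) ∈ V} +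
        μ.real (⋃ i ∈ I ∪ J, {ω | c < Z ω i}) := by
  have hsub : {ω | Y ω + Z ω ∈ U ∩ V} ⊆
      Y ⁻¹' ((· + fun _ => c) ⁻¹' U ∩ (· + fun _ => c) ⁻¹' V) ∪
        ⋃ i ∈ I ∪ J, {ω | c < Z ω i} := by
    intro ω ⟨hωU, hωV⟩
    by_cases hZ : ∀ i ∈ I ∪ J, Z ω i ≤ c
    · refine Or.inl ⟨hUI.mem_of_le hU hωU fun i hi => ?_, hVJ.mem_of_le hV hωV fun i hi => ?_⟩
      · exact add_le_add_right (hZ i (Finset.mem_union_left _ hi)) _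
      · exact add_le_add_right (hZ i (Finset.mem_union_right _ hi)) _
    · push Not at hZ
      obtain ⟨i, hi, hci⟩ := hZ
      exact Or.inr (mem_biUnion hi hci)
  have hshift : Continuous (fun x : Fin n → ℝ => x + fun _ => c) := by fun_prop
  calc μ.real {ω | Y ω + Z ω ∈ U ∩ V}
      ≤ μ.real (Y ⁻¹' ((· + fun _ => c) ⁻¹' U ∩ (· + fun _ => c) ⁻¹' V)) +
          μ.real (⋃ i ∈ I ∪ J, {ω | c < Z ω i}) :=
        (measureReal_mono hsub).trans (measureReal_union_le _ _)
    _ = _ := by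
      rw [measureReal_preimage_inter_eq_mul hY (hUm.preimage hshift.measurable)
        (hVm.preimage hshift.measurable) (hUI.preimage_add_const c) (hVJ.preimage_add_const c)]
      rfl

lemma measureReal_add_const_mem_le (hU : IsUpperSet U) (hUI : SupportedOn U I) (c : ℝ) :
    μ.real {ω | Y ω + (fun _ => c) ∈ U} ≤
      μ.real {ω | Y ω + Z ω + (fun _ => 2 * c) ∈ U} + μ.real (⋃ i ∈ I, {ω | Z ω i < -c}) := by
  refine (measureReal_mono fun ω hω => ?_).trans (measureReal_union_le _ _)
  by_cases hZ : ∀ i ∈ I, -c ≤ Z ω i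
  · refine Or.inl (hUI.mem_of_le hU hω fun i hi => ?_)
    simp only [Pi.add_apply]
    linarith [hZ i hi]
  · push Not at hZ
    obtain ⟨i, hi, hci⟩ := hZ
    exact Or.inr (mem_biUnion hi hci)

end Decoupling

section Interior

lemma mul_le_mul_add_of_le_add {p₁ p₂ q₁ q₂ e₁ e₂ : ℝ} (h₁ : p₁ ≤ q₁ + e₁) (h₂ : p₂ ≤ q₂ + e₂)
    (hp₂ : 0 ≤ p₂) (hp₂' : p₂ ≤ 1) (hq₁ : 0 ≤ q₁) (hq₁' : q₁ ≤ 1) (he₁ : 0 ≤ e₁) (he₂ : 0 ≤ e₂) :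
    p₁ * p₂ ≤ q₁ * q₂ + (e₁ + e₂) := by
  nlinarith [mul_le_mul_of_nonneg_right h₁ hp₂, mul_le_mul_of_nonneg_left h₂ hq₁]

variable {Ω : Type*} {mΩ : MeasurableSpace Ω} {μ : Measure Ω} [IsProbabilityMeasure μ]

lemma measureReal_preimage_eq_of_map_eq {β : Type*} [MeasurableSpace β] {X W : Ω → β}
    (hX : AEMeasurable X μ) (hlaw : μ.map X = μ.map W) {s : Set β} (hs : MeasurableSet s) :
    μ.real (X ⁻¹' s) = μ.real (W ⁻¹' s) := by
  have : IsProbabilityMeasure (μ.map W) := hlaw ▸ Measure.isProbabilityMeasure_map hX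
  have hW : AEMeasurable W μ := aemeasurable_of_map_neZero inferInstance
  rw [← map_measureReal_apply_of_aemeasurable hX hs, hlaw,
    map_measureReal_apply_of_aemeasurable hW hs]

variable {n : ℕ} {I J : Finset (Fin n)} {X Y Z : Ω → Fin n → ℝ}

lemma measureReal_add_const_mem_shifted_interior_le (hX : AEMeasurable X μ)
    (hlaw : μ.map X = μ.map (fun ω => Y ω + Z ω)) {C : Set (Fin n → ℝ)} (hC : IsUpperSet C)
    (hCI : SupportedOn C I) (δ c : ℝ) :
    μ.real {ω | Y ω + (fun _ => c) ∈ (· + fun _ => δ) ⁻¹' interior C} ≤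
      μ.real {ω | X ω + (fun _ => δ + 2 * c) ∈ C} + μ.real (⋃ i ∈ I, {ω | Z ω i < -c}) := by
  refine (measureReal_add_const_mem_le (hC.interior.preimage_add_const δ)
    (hCI.interior.preimage_add_const δ) c).trans (add_le_add_left ?_ _)
  have hmeas : MeasurableSet ((· + fun _ => 2 * c) ⁻¹' ((· + fun _ => δ) ⁻¹' interior C)) :=
    (isOpen_interior.preimage (by fun_prop)).preimage (by fun_prop) |>.measurableSet
  calc μ.real {ω | Y ω + Z ω + (fun _ => 2 * c) ∈ (· + fun _ => δ) ⁻¹' interior C}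
      = μ.real {ω | X ω + (fun _ => 2 * c) ∈ (· + fun _ => δ) ⁻¹' interior C} :=
        (measureReal_preimage_eq_of_map_eq hX hlaw hmeas).symm
    _ ≤ μ.real {ω | X ω + (fun _ => δ + 2 * c) ∈ C} := measureReal_mono fun ω hω => by
        have hsum : X ω + (fun _ => 2 * c) + (fun _ => δ) = X ω + fun _ => δ + 2 * c := by
          ext; simp only [Pi.add_apply]; ring
        change _ ∈ C
        rw [← hsum]
        exact interior_subset hω

theorem measureReal_inter_le_mul_add_tails (hX : AEMeasurable X μ)
    (hlaw : μ.map X = μ.map (fun ω => Y ω + Z ω))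
    (hY : IndepFun (fun ω (i : I) => Y ω i) (fun ω (i : J) => Y ω i) μ)
    {A B : Set (Fin n → ℝ)} (hA : IsUpperSet A) (hB : IsUpperSet B)
    (hAI : SupportedOn A I) (hBJ : SupportedOn B J) {δ : ℝ} (hδ : 0 < δ) (c : ℝ) :
    μ.real {ω | X ω ∈ A ∩ B} ≤
      μ.real {ω | X ω + (fun _ => δ + 2 * c) ∈ A} *
          μ.real {ω | X ω + (fun _ => δ + 2 * c) ∈ B} +
        (μ.real (⋃ i ∈ I ∪ J, {ω | c < Z ω i}) + μ.real (⋃ i ∈ I, {ω | Z ω i < -c}) +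
          μ.real (⋃ i ∈ J, {ω | Z ω i < -c})) := by
  -- shifting by `δ` into the interior replaces `A` and `B` by open, hence measurable, sets
  have hopen {C : Set (Fin n → ℝ)} : IsOpen ((· + fun _ => δ) ⁻¹' interior C) :=
    isOpen_interior.preimage (by fun_prop)
  calc μ.real {ω | X ω ∈ A ∩ B}
      ≤ μ.real {ω | Y ω + Z ω ∈
          (· + fun _ => δ) ⁻¹' interior A ∩ (· + fun _ => δ) ⁻¹' interior B} := by
        refine (measureReal_mono fun ω hω => ?_).trans
          (measureReal_preimage_eq_of_map_eq hX hlaw (hopen.inter hopen).measurableSet).le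
        exact ⟨hA.add_const_mem_interior hω.1 hδ, hB.add_const_mem_interior hω.2 hδ⟩
    _ ≤ _ := (measureReal_add_mem_inter_le hY hopen.measurableSet hopen.measurableSet
          (hA.interior.preimage_add_const δ) (hB.interior.preimage_add_const δ)
          (hAI.interior.preimage_add_const δ) (hBJ.interior.preimage_add_const δ) c)
    _ ≤ _ := by
      linarith [mul_le_mul_add_of_le_add
        (measureReal_add_const_mem_shifted_interior_le hX hlaw hA hAI δ c)
        (measureReal_add_const_mem_shifted_interior_le hX hlaw hB hBJ δ c)
        measureReal_nonneg measureReal_le_one measureReal_nonneg measureReal_le_one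
        measureReal_nonneg measureReal_nonneg]

end Interior

section GaussianTail

variable {v : ℝ≥0}

lemma gaussianReal_Ici_self (m : ℝ) (hv : v ≠ 0) : gaussianReal m v (Ici m) = 2⁻¹ := by
  have hrefl : (gaussianReal m v).map (fun x => 2 * m - x) = gaussianReal m v := by
    rw [gaussianReal_map_const_sub]
    congr 1
    ring
  have hsymm : gaussianReal m v (Iic m) = gaussianReal m v (Ici m) := by
    conv_lhs => rw [← hrefl]
    rw [Measure.map_apply (by fun_prop) measurableSet_Iic]
    congr 1
    ext x
    simp only [mem_preimage, mem_Iic, mem_Ici]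
    constructor <;> intro h <;> linarith
  have := nullSingletonClass_gaussianReal (μ := m) hv
  have hsum := measure_union_add_inter (μ := gaussianReal m v) (Iic m)
    (measurableSet_Ici (a := m))
  rw [Iic_union_Ici, Iic_inter_Ici, Icc_self, measure_univ, measure_singleton, add_zero, hsymm,
    ← two_mul] at hsum
  exact ENNReal.eq_inv_of_mul_eq_one_left (by rw [mul_comm]; exact hsum.symm)

lemma gaussianReal_zero_Ici_le (hv : v ≠ 0) {c : ℝ} (hc : 0 ≤ c) :
    gaussianReal 0 v (Ici c) ≤
      ENNReal.ofReal (exp (-c ^ 2 / (2 * v))) * gaussianReal c v (Ici c) := by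
  rw [gaussianReal_apply 0 hv, gaussianReal_apply c hv,
    ← lintegral_const_mul _ (measurable_gaussianPDF c v)]
  refine setLIntegral_mono ((measurable_gaussianPDF c v).const_mul _) fun x (hx : c ≤ x) => ?_
  rw [gaussianPDF, gaussianPDF, ← ENNReal.ofReal_mul (exp_nonneg _), gaussianPDFReal,
    gaussianPDFReal, mul_left_comm, ← exp_add]
  gcongr
  rw [← add_div]
  gcongr
  -- for `x ≥ c ≥ 0`: `x² ≥ c² + (x - c)²`
  nlinarith [mul_nonneg hc (sub_nonneg.2 hx)]

lemma gaussianReal_real_Ioi_le_s11 {σ c : ℝ} (hv : (v : ℝ) ≤ σ ^ 2) (hc : 0 ≤ c) :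
    (gaussianReal 0 v).real (Ioi c) ≤ exp (-c ^ 2 / (2 * σ ^ 2)) / 2 := by
  rcases eq_or_ne v 0 with rfl | hv0
  · simp [measureReal_def, hc.not_gt]
    positivity
  refine ENNReal.toReal_le_of_le_ofReal (by positivity) ?_
  calc gaussianReal 0 v (Ioi c)
      ≤ ENNReal.ofReal (exp (-c ^ 2 / (2 * v))) * 2⁻¹ := by
        rw [← gaussianReal_Ici_self c hv0]
        exact (measure_mono Ioi_subset_Ici_self).trans (gaussianReal_zero_Ici_le hv0 hc)
    _ ≤ ENNReal.ofReal (exp (-c ^ 2 / (2 * σ ^ 2))) * 2⁻¹ := by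
        have : (0 : ℝ) < v := NNReal.coe_pos.2 (pos_iff_ne_zero.2 hv0)
        gcongr ?_ * _
        refine ENNReal.ofReal_le_ofReal (exp_le_exp.2 ?_)
        rw [neg_div, neg_div, neg_le_neg_iff]
        exact div_le_div_of_nonneg_left (sq_nonneg c) (by positivity) (by linarith)
    _ = ENNReal.ofReal (exp (-c ^ 2 / (2 * σ ^ 2)) / 2) := by
        rw [ENNReal.ofReal_div_of_pos two_pos, ENNReal.ofReal_ofNat, ENNReal.div_eq_inv_mul,
          mul_comm]

variable {Ω : Type*} {mΩ : MeasurableSpace Ω} {μ : Measure Ω} {W : Ω → ℝ} {m σ c : ℝ}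

lemma measureReal_gt_le_of_map_eq_gaussianReal (hW : μ.map W = gaussianReal m v)
    (hmean : ∫ ω, W ω ∂μ = 0) (hvar : ∫ ω, W ω ^ 2 ∂μ ≤ σ ^ 2) (hc : 0 ≤ c) :
    μ.real {ω | c < W ω} ≤ exp (-c ^ 2 / (2 * σ ^ 2)) / 2 := by
  have hWm : AEMeasurable W μ := aemeasurable_of_map_neZero (by rw [hW]; infer_instance)
  obtain rfl : m = 0 := by
    rw [← integral_id_gaussianReal (μ := m) (v := v), ← hW,
      integral_map hWm (by fun_prop)]
    exact hmean
  have hv : (v : ℝ) ≤ σ ^ 2 :=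
    calc (v : ℝ) = ∫ x, x ^ 2 ∂gaussianReal 0 v := by
          rw [← variance_fun_id_gaussianReal (μ := 0) (v := v),
            variance_of_integral_eq_zero aemeasurable_id' integral_id_gaussianReal]
      _ = ∫ ω, W ω ^ 2 ∂μ := by rw [← hW, integral_map hWm (by fun_prop)]
      _ ≤ σ ^ 2 := hvar
  calc μ.real {ω | c < W ω} = (gaussianReal 0 v).real (Ioi c) := by
        rw [← hW, map_measureReal_apply_of_aemeasurable hWm measurableSet_Ioi]
        rfl
    _ ≤ _ := gaussianReal_real_Ioi_le_s11 hv hc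

lemma measureReal_lt_neg_le_of_map_eq_gaussianReal (hW : μ.map W = gaussianReal m v)
    (hmean : ∫ ω, W ω ∂μ = 0) (hvar : ∫ ω, W ω ^ 2 ∂μ ≤ σ ^ 2) (hc : 0 ≤ c) :
    μ.real {ω | W ω < -c} ≤ exp (-c ^ 2 / (2 * σ ^ 2)) / 2 := by
  have hWm : AEMeasurable W μ := aemeasurable_of_map_neZero (by rw [hW]; infer_instance)
  have hneg : μ.map (fun ω => -W ω) = gaussianReal (-m) v := by
    rw [← gaussianReal_map_neg, ← hW, AEMeasurable.map_map_of_aemeasurable (by fun_prop) hWm]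
    rfl
  simpa [lt_neg] using measureReal_gt_le_of_map_eq_gaussianReal hneg
    (by rw [integral_neg, hmean, neg_zero]) (by simpa only [neg_sq] using hvar) hc

end GaussianTail

lemma measureReal_biUnion_le_card_mul {Ω ι : Type*} {mΩ : MeasurableSpace Ω} {μ : Measure Ω}
    {s : Finset ι} {f : ι → Set Ω} {t : ℝ} (h : ∀ i ∈ s, μ.real (f i) ≤ t) :
    μ.real (⋃ i ∈ s, f i) ≤ s.card * t :=
  (measureReal_biUnion_finset_le s f).trans (by simpa using Finset.sum_le_card_nsmul s _ t h)

section GaussianVector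

variable {Ω : Type*} [MeasureSpace Ω] {n : ℕ} {X : Ω → Fin n → ℝ}

lemma IsGaussianVector.exists_map_apply (hX : IsGaussianVector X) (i : Fin n) :
    ∃ (m : ℝ) (v : ℝ≥0), (ℙ : Measure Ω).map (fun ω => X ω i) = gaussianReal m v := by
  simpa [Pi.single_apply] using hX (Pi.single i 1)

lemma IsGaussianVector.aemeasurable (hX : IsGaussianVector X) : AEMeasurable X ℙ :=
  aemeasurable_pi_lambda _ fun i => by
    obtain ⟨m, v, h⟩ := hX.exists_map_apply i
    exact aemeasurable_of_map_neZero (by rw [h]; infer_instance)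

variable {K : Finset (Fin n)} {σ c : ℝ}

lemma IsGaussianVector.measureReal_biUnion_gt_le (hX : IsGaussianVector X)
    (hmean : ∀ i ∈ K, ∫ ω, X ω i ∂ℙ = 0) (hvar : ∀ i ∈ K, ∫ ω, X ω i ^ 2 ∂ℙ ≤ σ ^ 2)
    (hc : 0 ≤ c) :
    (ℙ : Measure Ω).real (⋃ i ∈ K, {ω | c < X ω i}) ≤
      K.card * (exp (-c ^ 2 / (2 * σ ^ 2)) / 2) :=
  measureReal_biUnion_le_card_mul fun i hi =>
    let ⟨_, _, hmap⟩ := hX.exists_map_apply i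
    measureReal_gt_le_of_map_eq_gaussianReal hmap (hmean i hi) (hvar i hi) hc

lemma IsGaussianVector.measureReal_biUnion_lt_neg_le (hX : IsGaussianVector X)
    (hmean : ∀ i ∈ K, ∫ ω, X ω i ∂ℙ = 0) (hvar : ∀ i ∈ K, ∫ ω, X ω i ^ 2 ∂ℙ ≤ σ ^ 2)
    (hc : 0 ≤ c) :
    (ℙ : Measure Ω).real (⋃ i ∈ K, {ω | X ω i < -c}) ≤
      K.card * (exp (-c ^ 2 / (2 * σ ^ 2)) / 2) :=
  measureReal_biUnion_le_card_mul fun i hi =>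
    let ⟨_, _, hmap⟩ := hX.exists_map_apply i
    measureReal_lt_neg_le_of_map_eq_gaussianReal hmap (hmean i hi) (hvar i hi) hc

end GaussianVector

theorem stmt11_general {n : ℕ} {Ω : Type*} [MeasureSpace Ω]
    [IsProbabilityMeasure (ℙ : Measure Ω)]
    (X X1 X2 : Ω → Fin n → ℝ)
    (hX : IsGaussianVector X) (hX2 : IsGaussianVector X2)
    (hdecomp : Measure.map X ℙ = Measure.map (fun ω => X1 ω + X2 ω) ℙ)
    (I1 I2 : Finset (Fin n))
    (hindep : IndepFun (fun ω (i : I1) => X1 ω i) (fun ω (i : I2) => X1 ω i) ℙ)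
    (hcentred : ∀ i, ∫ ω, X2 ω i ∂ℙ = 0)
    (σ : ℝ)
    (hvar : ∀ i ∈ I1 ∪ I2, ∫ ω, (X2 ω i) ^ 2 ∂ℙ ≤ σ ^ 2)
    (A1 A2 : Set (Fin n → ℝ))
    (hInc1 : IncreasingEvent A1) (hInc2 : IncreasingEvent A2)
    (hSupp1 : SupportedOn A1 ↑I1) (hSupp2 : SupportedOn A2 ↑I2)
    (ε : ℝ) (hε : 0 < ε) :
    (ℙ {ω | X ω ∈ A1 ∩ A2}).toReal -
        (ℙ {ω | (fun i => X ω i + ε) ∈ A1}).toReal *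
          (ℙ {ω | (fun i => X ω i + ε) ∈ A2}).toReal ≤
      3 * max (I1.card : ℝ) (I2.card : ℝ) * Real.exp (-ε ^ 2 / (8 * σ ^ 2)) := by
  set D := (ℙ : Measure Ω).real {ω | X ω ∈ A1 ∩ A2} -
    (ℙ : Measure Ω).real {ω | X ω + (fun _ => ε) ∈ A1} *
      (ℙ : Measure Ω).real {ω | X ω + (fun _ => ε) ∈ A2}
  set N : ℝ := (I1 ∪ I2).card + I1.card + I2.card
  set M := max (I1.card : ℝ) (I2.card : ℝ)
  change D ≤ 3 * M * exp (-ε ^ 2 / (8 * σ ^ 2))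
  have hbound : ∀ δ ∈ Ioo 0 ε, D ≤ N * (exp (-(ε - δ) ^ 2 / (8 * σ ^ 2)) / 2) := by
    rintro δ ⟨hδ, hδε⟩
    have hc : 0 ≤ (ε - δ) / 2 := by linarith
    have key := measureReal_inter_le_mul_add_tails hX.aemeasurable hdecomp hindep
      hInc1.isUpperSet hInc2.isUpperSet hSupp1 hSupp2 hδ ((ε - δ) / 2)
    rw [show δ + 2 * ((ε - δ) / 2) = ε by ring] at key
    have hB := hX2.measureReal_biUnion_gt_le (fun i _ => hcentred i) hvar hc
    have hB1 := hX2.measureReal_biUnion_lt_neg_le (fun i _ => hcentred i)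
      (fun i hi => hvar i (Finset.mem_union_left I2 hi)) hc
    have hB2 := hX2.measureReal_biUnion_lt_neg_le (fun i _ => hcentred i)
      (fun i hi => hvar i (Finset.mem_union_right I1 hi)) hc
    rw [show -(ε - δ) ^ 2 / (8 * σ ^ 2) = -((ε - δ) / 2) ^ 2 / (2 * σ ^ 2) by ring]
    linarith
  have hlim : D ≤ N * (exp (-ε ^ 2 / (8 * σ ^ 2)) / 2) := by
    have hcont : Continuous fun δ => N * (exp (-(ε - δ) ^ 2 / (8 * σ ^ 2)) / 2) := by fun_prop
    have hf := (hcont.tendsto 0).mono_left (nhdsWithin_le_nhds (s := Ioi 0))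
    simp only [sub_zero] at hf
    exact ge_of_tendsto hf (by filter_upwards [Ioo_mem_nhdsGT hε] with δ hδ using hbound δ hδ)
  have hN : N ≤ 4 * M := by
    have h : ((I1 ∪ I2).card : ℝ) ≤ I1.card + I2.card := by
      exact_mod_cast Finset.card_union_le I1 I2
    linarith [le_max_left (I1.card : ℝ) I2.card, le_max_right (I1.card : ℝ) I2.card]
  calc D ≤ N * (exp (-ε ^ 2 / (8 * σ ^ 2)) / 2) := hlim
    _ ≤ 3 * M * exp (-ε ^ 2 / (8 * σ ^ 2)) := by
      nlinarith [exp_pos (-ε ^ 2 / (8 * σ ^ 2)),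
        (Nat.cast_nonneg _).trans (le_max_left (I1.card : ℝ) I2.card)]

theorem stmt11 {n : ℕ} {Ω : Type*} [MeasureSpace Ω]
    [IsProbabilityMeasure (ℙ : Measure Ω)]
    (X X1 X2 : Ω → Fin n → ℝ)
    (hX : IsGaussianVector X) (hX1 : IsGaussianVector X1) (hX2 : IsGaussianVector X2)
    (hdecomp : Measure.map X ℙ = Measure.map (fun ω => X1 ω + X2 ω) ℙ)
    (I1 I2 : Finset (Fin n))
    (hindep : IndepFun (fun ω (i : I1) => X1 ω i) (fun ω (i : I2) => X1 ω i) ℙ)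
    (hcentred : ∀ i, ∫ ω, X2 ω i ∂ℙ = 0)
    (σ : ℝ) (hσ : 0 < σ)
    (hvar : ∀ i ∈ I1 ∪ I2, ∫ ω, (X2 ω i) ^ 2 ∂ℙ ≤ σ ^ 2)
    (A1 A2 : Set (Fin n → ℝ))
    (hInc1 : IncreasingEvent A1) (hInc2 : IncreasingEvent A2)
    (hSupp1 : SupportedOn A1 ↑I1) (hSupp2 : SupportedOn A2 ↑I2)
    (ε : ℝ) (hε : 0 < ε) :
    (ℙ {ω | X ω ∈ A1 ∩ A2}).toReal -
        (ℙ {ω | (fun i => X ω i + ε) ∈ A1}).toReal *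
          (ℙ {ω | (fun i => X ω i + ε) ∈ A2}).toReal ≤
      3 * max (I1.card : ℝ) (I2.card : ℝ) * Real.exp (-ε ^ 2 / (8 * σ ^ 2)) :=
  stmt11_general X X1 X2 hX hX2 hdecomp I1 I2 hindep hcentred σ hvar A1 A2 hInc1 hInc2 hSupp1 hSupp2
    ε hε
end

section
/- For a Gaussian vector $X$ with covariance $K$ and reproducing kernel Hilbert space $H$, the capacity satisfies the duality $\mathrm{Cap}(I) := (\inf_{\mu \in \mathcal{P}(I)}\sum_{i,j \in I}\mu(i)K(i,j)\mu(j))^{-1} = \inf\{\|h\|_H^2 : h \in H, \ h(i) \ge 1 \text{ for all } i \in I\}$, where $\mathcal{P}(I)$ is the set of probability measures on the finite set $I$. -/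
open MeasureTheory ProbabilityTheory
open scoped ENNReal

/-!
Positive semidefiniteness of `K` is `Var(∑ aᵢ Xᵢ) ≥ 0`. The energy `μ ↦ μᵀKμ` is continuous on
the compact convex set of probability vectors on `I`, so it attains its minimum `c` at some `μ₀`,
and first-order optimality along the segments towards the Dirac masses gives `(Kμ₀)(i) ≥ c` for
`i ∈ I`. If `h = Ka ≥ 1` on `I`, then `1 ≤ ⟨a, Kμ₀⟩ ≤ (aᵀKa)^{1/2} c^{1/2}` by Cauchy–Schwarz for
the form `K`, so `‖h‖² ≥ 1/c`, and `a = μ₀ / c` attains the bound. When `c = 0` no admissible `h`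
exists, matching `1/0 = ∞`.
-/

open Finset Filter Topology
open scoped Matrix

namespace ProbabilityTheory

variable {Ω : Type*} {mΩ : MeasurableSpace Ω} {μ : Measure Ω}

lemma memLp_two_of_map_eq_gaussianReal {Y : Ω → ℝ} {m : ℝ} {v : NNReal}
    (h : μ.map Y = gaussianReal m v) : MemLp Y 2 μ := by
  have hY : AEMeasurable Y μ := aemeasurable_of_map_neZero (by rw [h]; infer_instance)
  have hid : MemLp id 2 (μ.map Y) := h ▸ memLp_id_gaussianReal' 2 (by simp)
  exact (memLp_map_measure_iff (by fun_prop) hY).1 hid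

lemma covariance_self_nonneg (Y : Ω → ℝ) : 0 ≤ cov[Y, Y; μ] :=
  integral_nonneg fun _ => mul_self_nonneg _

lemma posSemidef_covariance [IsFiniteMeasure μ] {ι : Type*} [Fintype ι] {Y : ι → Ω → ℝ}
    (hY : ∀ i, MemLp (Y i) 2 μ) : (Matrix.of fun i j => cov[Y i, Y j; μ]).PosSemidef := by
  refine .of_dotProduct_mulVec_nonneg (.ext fun i j => by simp [covariance_comm]) fun a => ?_
  have hcov : star a ⬝ᵥ ((Matrix.of fun i j => cov[Y i, Y j; μ]) *ᵥ a) =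
      cov[fun ω => ∑ i, a i * Y i ω, fun ω => ∑ j, a j * Y j ω; μ] := by
    rw [covariance_fun_sum_fun_sum (fun i => (hY i).const_mul (a i))
      (fun j => (hY j).const_mul (a j))]
    simp only [covariance_const_mul_left, covariance_const_mul_right, dotProduct,
      Matrix.mulVec, Matrix.of_apply, star_trivial, mul_sum]
    exact sum_congr rfl fun i _ => sum_congr rfl fun j _ => by ring
  exact hcov ▸ covariance_self_nonneg _

end ProbabilityTheory

section GaussianVector

variable {Ω : Type*} [MeasureSpace Ω] {n : ℕ} {X : Ω → Fin n → ℝ}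

lemma IsGaussianVector.memLp_two (hX : IsGaussianVector X) (i : Fin n) :
    MemLp (fun ω => X ω i) 2 ℙ := by
  obtain ⟨m, v, h⟩ := hX (Pi.single i 1)
  simp only [Pi.single_apply, ite_mul, one_mul, zero_mul, sum_ite_eq', mem_univ,
    if_true] at h
  exact memLp_two_of_map_eq_gaussianReal h

end GaussianVector

lemma nonneg_of_forall_mem_Ioc_add_mul_nonneg {b q : ℝ}
    (h : ∀ t ∈ Set.Ioc (0 : ℝ) 1, 0 ≤ b + t * q) : 0 ≤ b := by
  have hlim : Tendsto (fun t : ℝ => b + t * q) (𝓝[>] 0) (𝓝 b) := by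
    have hcont : Continuous fun t : ℝ => b + t * q := by fun_prop
    simpa using (hcont.tendsto 0).mono_left nhdsWithin_le_nhds
  exact ge_of_tendsto hlim (eventually_of_mem (Ioc_mem_nhdsGT zero_lt_one) h)

namespace LinearMap.BilinForm

variable {M : Type*} [AddCommGroup M] [Module ℝ M] {B : LinearMap.BilinForm ℝ M}

lemma apply_self_le_apply_of_isMinOn (hB : LinearMap.IsSymm B) {S : Set M} (hS : Convex ℝ S)
    {x y : M} (hx : x ∈ S) (hy : y ∈ S) (hmin : IsMinOn (fun z => B z z) S x) : B x x ≤ B x y := by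
  have hexpand : ∀ t : ℝ, B (x + t • (y - x)) (x + t • (y - x)) =
      B x x + t * (2 * B x (y - x) + t * B (y - x) (y - x)) := fun t => by
    simp only [map_add, map_smul, LinearMap.add_apply, LinearMap.smul_apply, smul_eq_mul]
    rw [← hB.eq x (y - x), RingHom.id_apply]
    ring
  have hdir : ∀ t ∈ Set.Ioc (0 : ℝ) 1, 0 ≤ 2 * B x (y - x) + t * B (y - x) (y - x) := by
    intro t ht
    have hle := isMinOn_iff.1 hmin _ (hS.add_smul_sub_mem hx hy ⟨ht.1.le, ht.2⟩)
    rw [hexpand] at hle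
    exact (mul_nonneg_iff_of_pos_left ht.1).1 (by linarith)
  have := nonneg_of_forall_mem_Ioc_add_mul_nonneg hdir
  simp only [map_sub] at this
  linarith

end LinearMap.BilinForm

section StdSimplexOn

variable {ι : Type*} [Fintype ι]

def stdSimplexOn (I : Finset ι) : Set (ι → ℝ) :=
  stdSimplex ℝ ι ∩ {μ | ∀ i ∉ I, μ i = 0}

lemma mem_stdSimplexOn {I : Finset ι} {μ : ι → ℝ} :
    μ ∈ stdSimplexOn I ↔ (∀ i, 0 ≤ μ i) ∧ (∀ i ∉ I, μ i = 0) ∧ ∑ i ∈ I, μ i = 1 := by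
  refine ⟨fun ⟨⟨hpos, hsum⟩, hsupp⟩ => ⟨hpos, hsupp, ?_⟩,
    fun ⟨hpos, hsupp, hsum⟩ => ⟨⟨hpos, ?_⟩, hsupp⟩⟩
  all_goals rwa [sum_subset (subset_univ I) fun i _ hi => hsupp i hi] at *

lemma isCompact_stdSimplexOn (I : Finset ι) : IsCompact (stdSimplexOn I) := by
  refine (isCompact_stdSimplex ℝ ι).inter_right ?_
  simp only [Set.ofPred_forall]
  exact isClosed_iInter fun i => isClosed_iInter fun _ =>
    isClosed_eq (continuous_apply i) continuous_const

lemma convex_stdSimplexOn (I : Finset ι) : Convex ℝ (stdSimplexOn I) := by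
  refine (convex_stdSimplex ℝ ι).inter fun x hx y hy a b _ _ _ i hi => ?_
  simp [hx i hi, hy i hi]

lemma single_mem_stdSimplexOn [DecidableEq ι] {I : Finset ι} {i : ι} (hi : i ∈ I) :
    Pi.single i 1 ∈ stdSimplexOn I :=
  ⟨single_mem_stdSimplex ℝ i, fun _ hj => Pi.single_eq_of_ne (by rintro rfl; exact hj hi) _⟩

lemma one_le_sum_mul_of_mem_stdSimplexOn {I : Finset ι} {μ h : ι → ℝ}
    (hμ : μ ∈ stdSimplexOn I) (hh : ∀ i ∈ I, 1 ≤ h i) : 1 ≤ ∑ i, h i * μ i := by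
  obtain ⟨hpos, hsupp, hsum⟩ := mem_stdSimplexOn.1 hμ
  calc 1 = ∑ i ∈ I, μ i := hsum.symm
    _ ≤ ∑ i ∈ I, h i * μ i := sum_le_sum fun i hi => le_mul_of_one_le_left (hpos i) (hh i hi)
    _ = ∑ i, h i * μ i := sum_subset (subset_univ I) fun i _ hi => by simp [hsupp i hi]

end StdSimplexOn

namespace Matrix

variable {ι R : Type*} [Fintype ι] [DecidableEq ι] [CommRing R] (M : Matrix ι ι R) (a b : ι → R)

lemma toBilin'_apply_eq_sum_vecMul : M.toBilin' a b = ∑ j, (∑ i, a i * M i j) * b j := by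
  rw [toBilin'_apply, sum_comm]
  simp only [sum_mul]

lemma toBilin'_apply_single (i : ι) :
    M.toBilin' a (Pi.single i 1) = ∑ j, a j * M j i := by
  simp [toBilin'_apply_eq_sum_vecMul, Pi.single_apply]

lemma toBilin'_self : M.toBilin' a a = ∑ i, ∑ j, a i * a j * M i j := by
  simp only [toBilin'_apply, mul_right_comm]

variable {M : Matrix ι ι ℝ}

lemma PosSemidef.isSymm_toBilin' (hM : M.PosSemidef) : LinearMap.IsSymm M.toBilin' :=
  LinearMap.BilinForm.isSymm_iff.1 <| isSymm_toBilin'_iff_isSymm.2 <|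
    (conjTranspose_eq_transpose_of_trivial M).symm.trans hM.1

lemma PosSemidef.toBilin'_self_nonneg (hM : M.PosSemidef) (a : ι → ℝ) : 0 ≤ M.toBilin' a a := by
  simpa [toBilin'_apply'] using hM.dotProduct_mulVec_nonneg a

end Matrix

section Capacity

variable {ι : Type*} [Fintype ι]

noncomputable def minEnergy (K : ι → ι → ℝ) (I : Finset ι) : ℝ≥0∞ :=
  sInf {r : ℝ≥0∞ | ∃ μ : ι → ℝ, (∀ i, 0 ≤ μ i) ∧ (∀ i ∉ I, μ i = 0) ∧
    (∑ i ∈ I, μ i) = 1 ∧ r = ENNReal.ofReal (∑ i ∈ I, ∑ j ∈ I, μ i * K i j * μ j)}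

/-- `h = ∑ⱼ aⱼ K(j,·)` is encoded by its coefficient vector `a`. -/
noncomputable def minRKHSNormSq (K : ι → ι → ℝ) (I : Finset ι) : ℝ≥0∞ :=
  sInf {r : ℝ≥0∞ | ∃ a : ι → ℝ, (∀ i ∈ I, 1 ≤ ∑ j, a j * K j i) ∧
    r = ENNReal.ofReal (∑ i, ∑ j, a i * a j * K i j)}

omit [Fintype ι] in
lemma minEnergy_empty (K : ι → ι → ℝ) : minEnergy K ∅ = ⊤ := by
  simp [minEnergy]

lemma minRKHSNormSq_empty (K : ι → ι → ℝ) : minRKHSNormSq K ∅ = 0 :=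
  le_zero_iff.1 <| sInf_le ⟨0, by simp, by simp⟩

variable [DecidableEq ι] {K : ι → ι → ℝ} {I : Finset ι} {μ₀ : ι → ℝ}

lemma minEnergy_eq_of_isMinOn (hμ₀ : μ₀ ∈ stdSimplexOn I)
    (hmin : IsMinOn (fun μ => (Matrix.of K).toBilin' μ μ) (stdSimplexOn I) μ₀) :
    minEnergy K I = ENNReal.ofReal ((Matrix.of K).toBilin' μ₀ μ₀) := by
  have henergy : ∀ μ : ι → ℝ, (∀ i ∉ I, μ i = 0) →
      ∑ i ∈ I, ∑ j ∈ I, μ i * K i j * μ j = (Matrix.of K).toBilin' μ μ := by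
    intro μ hμ
    rw [Matrix.toBilin'_apply]
    refine sum_subset (subset_univ I) (fun i _ hi => by simp [hμ i hi]) |>.trans
      (sum_congr rfl fun i _ => sum_subset (subset_univ I) fun j _ hj => by simp [hμ j hj])
  refine IsLeast.csInf_eq ⟨?_, ?_⟩
  · obtain ⟨hpos, hsupp, hsum⟩ := mem_stdSimplexOn.1 hμ₀
    exact ⟨μ₀, hpos, hsupp, hsum, by rw [henergy μ₀ hsupp]⟩
  · rintro r ⟨μ, hpos, hsupp, hsum, rfl⟩
    rw [henergy μ hsupp]
    exact ENNReal.ofReal_le_ofReal <| isMinOn_iff.1 hmin μ (mem_stdSimplexOn.2 ⟨hpos, hsupp, hsum⟩)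

lemma one_le_toBilin'_mul_toBilin' (hK : (Matrix.of K).PosSemidef) {μ a : ι → ℝ}
    (hμ : μ ∈ stdSimplexOn I) (ha : ∀ i ∈ I, 1 ≤ ∑ j, a j * K j i) :
    1 ≤ (Matrix.of K).toBilin' μ μ * (Matrix.of K).toBilin' a a := by
  have hone : 1 ≤ (Matrix.of K).toBilin' a μ := by
    simpa [Matrix.toBilin'_apply_eq_sum_vecMul] using one_le_sum_mul_of_mem_stdSimplexOn hμ ha
  nlinarith [(Matrix.of K).toBilin'.apply_sq_le_of_symm hK.toBilin'_self_nonneg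
    hK.isSymm_toBilin' a μ]

lemma toBilin'_self_le_of_isMinOn (hK : (Matrix.of K).PosSemidef) (hμ₀ : μ₀ ∈ stdSimplexOn I)
    (hmin : IsMinOn (fun μ => (Matrix.of K).toBilin' μ μ) (stdSimplexOn I) μ₀) {i : ι}
    (hi : i ∈ I) : (Matrix.of K).toBilin' μ₀ μ₀ ≤ ∑ j, μ₀ j * K j i := by
  simpa [Matrix.toBilin'_apply_single] using
    (Matrix.of K).toBilin'.apply_self_le_apply_of_isMinOn hK.isSymm_toBilin'
      (convex_stdSimplexOn I) hμ₀ (single_mem_stdSimplexOn hi) hmin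

lemma minRKHSNormSq_eq_of_isMinOn (hK : (Matrix.of K).PosSemidef) (hμ₀ : μ₀ ∈ stdSimplexOn I)
    (hmin : IsMinOn (fun μ => (Matrix.of K).toBilin' μ μ) (stdSimplexOn I) μ₀) :
    minRKHSNormSq K I = (ENNReal.ofReal ((Matrix.of K).toBilin' μ₀ μ₀))⁻¹ := by
  set B := (Matrix.of K).toBilin'
  set c := B μ₀ μ₀
  have hquad : ∀ a, B a a = ∑ i, ∑ j, a i * a j * K i j := fun a => by
    simp [B, Matrix.toBilin'_self]
  rcases (show 0 ≤ c from hK.toBilin'_self_nonneg μ₀).eq_or_lt with hc | hc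
  · rw [← hc, ENNReal.ofReal_zero, ENNReal.inv_zero, minRKHSNormSq, sInf_eq_top]
    rintro r ⟨a, ha, rfl⟩
    have hone : 1 ≤ c * B a a := one_le_toBilin'_mul_toBilin' hK hμ₀ ha
    rw [← hc, zero_mul] at hone
    norm_num at hone
  rw [← ENNReal.ofReal_inv_of_pos hc]
  refine le_antisymm (sInf_le ⟨c⁻¹ • μ₀, fun i hi => ?_, ?_⟩) (le_sInf ?_)
  · simp only [Pi.smul_apply, smul_eq_mul, mul_assoc, ← mul_sum]
    exact (le_inv_mul_iff₀ hc).2 (by simpa using toBilin'_self_le_of_isMinOn hK hμ₀ hmin hi)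
  · rw [← hquad]
    simp only [map_smul, LinearMap.smul_apply, smul_eq_mul]
    change _ = ENNReal.ofReal (c⁻¹ * (c⁻¹ * c))
    rw [inv_mul_cancel₀ hc.ne', mul_one]
  · rintro r ⟨a, ha, rfl⟩
    refine ENNReal.ofReal_le_ofReal ?_
    rw [← hquad, inv_le_iff_one_le_mul₀' hc]
    exact one_le_toBilin'_mul_toBilin' hK hμ₀ ha

omit [DecidableEq ι] in
theorem inv_minEnergy_eq_minRKHSNormSq (hK : (Matrix.of K).PosSemidef) (I : Finset ι) :
    (minEnergy K I)⁻¹ = minRKHSNormSq K I := by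
  classical
  rcases I.eq_empty_or_nonempty with rfl | ⟨i₀, hi₀⟩
  · rw [minEnergy_empty, minRKHSNormSq_empty, ENNReal.inv_top]
  have hcont : Continuous fun μ => (Matrix.of K).toBilin' μ μ := by
    simp only [Matrix.toBilin'_apply]
    fun_prop
  obtain ⟨μ₀, hμ₀, hmin⟩ := (isCompact_stdSimplexOn I).exists_isMinOn
    ⟨_, single_mem_stdSimplexOn hi₀⟩ hcont.continuousOn
  rw [minEnergy_eq_of_isMinOn hμ₀ hmin, minRKHSNormSq_eq_of_isMinOn hK hμ₀ hmin]

end Capacity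

/-- Capacity duality: `Cap(I) = inf {‖h‖_H² : h ∈ H, h(i) ≥ 1 for i ∈ I}`, where the
RKHS `H` is the span of the `K(i,·)` and `h = ∑ aᵢ K(i,·)` has `‖h‖_H² = ∑ aᵢaⱼK(i,j)`. -/
theorem stmt15 {n : ℕ} {Ω : Type*} [MeasureSpace Ω]
    [IsProbabilityMeasure (ℙ : Measure Ω)]
    (X : Ω → Fin n → ℝ) (hX : IsGaussianVector X)
    (K : Fin n → Fin n → ℝ)
    (hK : ∀ i j, K i j = ∫ ω, X ω i * X ω j ∂ℙ -
      (∫ ω, X ω i ∂ℙ) * (∫ ω, X ω j ∂ℙ))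
    (I : Finset (Fin n)) :
    (sInf {r : ℝ≥0∞ | ∃ μ : Fin n → ℝ, (∀ i, 0 ≤ μ i) ∧ (∀ i ∉ I, μ i = 0) ∧
        (∑ i ∈ I, μ i) = 1 ∧
        r = ENNReal.ofReal (∑ i ∈ I, ∑ j ∈ I, μ i * K i j * μ j)})⁻¹ =
      sInf {r : ℝ≥0∞ | ∃ a : Fin n → ℝ, (∀ i ∈ I, 1 ≤ ∑ j, a j * K j i) ∧
        r = ENNReal.ofReal (∑ i, ∑ j, a i * a j * K i j)} := by
  have hL2 := hX.memLp_two
  have hcov : (fun i j => cov[fun ω => X ω i, fun ω => X ω j; ℙ]) = K :=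
    funext₂ fun i j => by rw [hK, covariance_eq_sub (hL2 i) (hL2 j)]; rfl
  exact inv_minEnergy_eq_minRKHSNormSq (hcov ▸ posSemidef_covariance hL2) I
end
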